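/- For every n > 1 and every σ with 1 < σ ≤ n, there exists a string T of length Θ(n) over an alphabet of size Θ(σ) such that el(T)/er(T) ∈ Θ(min{n/σ, σ}), where el(T) and er(T) are the total numbers of left and right extensions of maximal repeats of T. Hence the upper bound el/er ≤ min{2n/σ, σ} is asymptotically tight for every alphabet size. -/
import Mathlib


open Finset

variable {α : Type*}

/-- Number of occurrences of `S` in `T`: positions `i` with `T[i..i+|S|-1] = S`. -/
def occ [DecidableEq α] (T S : List α) : ℕ :=
  ((Finset.range (T.length + 1)).filter fun i => (T.drop i).take S.length = S).card

/-- `S` is a maximal repeat of `T`. -/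
def MaxRepeat [DecidableEq α] (T S : List α) : Prop :=
  2 ≤ occ T S ∧ ∀ a : α, occ T (a :: S) < occ T S ∧ occ T (S ++ [a]) < occ T S

instance [DecidableEq α] [Fintype α] (T S : List α) : Decidable (MaxRepeat T S) := by
  unfold MaxRepeat; infer_instance

/-- The finite set of maximal repeats of `T`. -/
def MRset [DecidableEq α] [Fintype α] (T : List α) : Finset (List α) :=
  (T.tails.flatMap List.inits).toFinset.filter fun S => MaxRepeat T S

/-- Number of right extensions of `S` in `T`. -/
def rext [DecidableEq α] [Fintype α] (T S : List α) : ℕ :=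
  (Finset.univ.filter fun a : α => (S ++ [a]) <:+: T).card

/-- Number of left extensions of `S` in `T`. -/
def lext [DecidableEq α] [Fintype α] (T S : List α) : ℕ :=
  (Finset.univ.filter fun a : α => (a :: S) <:+: T).card

/-- Total number of right extensions of maximal repeats of `T`. -/
def er [DecidableEq α] [Fintype α] (T : List α) : ℕ := ∑ S ∈ MRset T, rext T S

/-- Total number of left extensions of maximal repeats of `T`. -/
def el [DecidableEq α] [Fintype α] (T : List α) : ℕ := ∑ S ∈ MRset T, lext T S

namespace LBC

variable [DecidableEq α]
set_option linter.unusedSectionVars false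

/-- the set of occurrence positions -/
def OccSet (T S : List α) : Finset ℕ :=
  (Finset.range (T.length + 1)).filter fun i => (T.drop i).take S.length = S

lemma occ_eq (T S : List α) : occ T S = (OccSet T S).card := rfl

lemma mem_OccSet {T S : List α} {i : ℕ} :
    i ∈ OccSet T S ↔ i ≤ T.length ∧ (T.drop i).take S.length = S := by
  simp [OccSet, Nat.lt_succ_iff]

lemma occ_len {T S : List α} {i : ℕ} (h : (T.drop i).take S.length = S) (hi : i ≤ T.length) :
    i + S.length ≤ T.length := by
  have := congrArg List.length h
  simp only [List.length_take, List.length_drop] at this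
  omega

lemma occ_of_append {T S : List α} {c : α} {i : ℕ}
    (h : (T.drop i).take (S ++ [c]).length = S ++ [c]) :
    (T.drop i).take S.length = S := by
  have h2 : (T.drop i).take S.length = ((T.drop i).take (S ++ [c]).length).take S.length := by
    rw [List.take_take]
    congr 1
    simp [List.length_append]
  rw [h2, h, List.take_left]

lemma right_subset (T S : List α) (c : α) : OccSet T (S ++ [c]) ⊆ OccSet T S := by
  intro i hi
  rw [mem_OccSet] at *
  exact ⟨hi.1, occ_of_append hi.2⟩

lemma occ_right_lt {T S : List α} {c : α} {i₀ : ℕ} (hi₀ : i₀ ∈ OccSet T S)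
    (h2 : (T.drop i₀).take (S ++ [c]).length ≠ S ++ [c]) :
    occ T (S ++ [c]) < occ T S := by
  refine Finset.card_lt_card ⟨right_subset T S c, fun hsub => h2 ?_⟩
  exact (mem_OccSet.mp (hsub hi₀)).2

lemma occ_right_ge {T S : List α} {c : α}
    (h : ∀ i ∈ OccSet T S, (T.drop i).take (S ++ [c]).length = S ++ [c]) :
    occ T S ≤ occ T (S ++ [c]) := by
  exact Finset.card_le_card fun i hi => mem_OccSet.mpr ⟨(mem_OccSet.mp hi).1, h i hi⟩

lemma occ_cons {T S : List α} {c : α} {i : ℕ} (hi : i ≤ T.length)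
    (h : (T.drop i).take (c :: S).length = c :: S) :
    (T.drop (i+1)).take S.length = S := by
  have h1 := congrArg (List.drop 1) h
  simp only [List.length_cons] at h1
  rw [List.drop_take, List.drop_drop] at h1
  simpa using h1

lemma occ_left_lt {T S : List α} {c : α} {i₀ : ℕ} (hi₀ : i₀ ∈ OccSet T S)
    (h2 : i₀ = 0 ∨ (T.drop (i₀-1)).take (c :: S).length ≠ c :: S) :
    occ T (c :: S) < occ T S := by
  rw [occ_eq, occ_eq]
  have key : ∀ i ∈ OccSet T (c :: S), i + 1 ∈ OccSet T S ∧ i + 1 ≠ i₀ := by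
    intro i hi
    rw [mem_OccSet] at hi
    have hlen := occ_len hi.2 hi.1
    simp only [List.length_cons] at hlen
    refine ⟨mem_OccSet.mpr ⟨by omega, occ_cons hi.1 hi.2⟩, ?_⟩
    rintro rfl
    rcases h2 with h2 | h2
    · omega
    · simp only [Nat.add_sub_cancel] at h2
      exact h2 hi.2
  calc (OccSet T (c :: S)).card ≤ ((OccSet T S).erase i₀).card := by
        refine Finset.card_le_card_of_injOn (· + 1) (fun i hi => ?_) (fun x _ y _ h => by simpa using h)
        exact Finset.mem_erase.mpr ⟨(key i hi).2, (key i hi).1⟩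
    _ < (OccSet T S).card := by
        have := Finset.card_erase_lt_of_mem hi₀
        omega

lemma occ_left_ge {T S : List α} {c : α}
    (h : ∀ i ∈ OccSet T S, 1 ≤ i ∧ (T.drop (i-1)).take (c :: S).length = c :: S) :
    occ T S ≤ occ T (c :: S) := by
  rw [occ_eq, occ_eq]
  refine Finset.card_le_card_of_injOn (· - 1) (fun i hi => ?_) (fun x hx y hy hxy => ?_)
  · have h1 := (h i hi).1
    have h2 := (h i hi).2
    have hi' := (mem_OccSet.mp hi).1
    show i - 1 ∈ OccSet T (c :: S)
    exact mem_OccSet.mpr ⟨by omega, h2⟩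
  · have hx1 := (h x hx).1
    have hy1 := (h y hy).1
    have hxy' : x - 1 = y - 1 := hxy
    omega

lemma infix_iff_occ {T S : List α} : S <:+: T ↔ (OccSet T S).Nonempty := by
  constructor
  · rintro ⟨u, v, rfl⟩
    refine ⟨u.length, mem_OccSet.mpr ⟨?_, ?_⟩⟩
    · simp [List.length_append]
    · rw [List.append_assoc, List.drop_left, List.take_left]
  · rintro ⟨i, hi⟩
    rw [mem_OccSet] at hi
    exact ((hi.2 ▸ List.take_prefix _ _).isInfix).trans (List.drop_suffix i T).isInfix

lemma mem_substr_iff (T S : List α) : S ∈ (T.tails.flatMap List.inits).toFinset ↔ S <:+: T := by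
  simp [List.mem_tails, List.mem_inits, List.infix_iff_prefix_suffix]
  tauto

end LBC

namespace LBC

/-! ### The witness string -/

def fL (σ k p : ℕ) : Fin (σ+2) :=
  ⟨(if p % (k+2) = 0 then 2 + p/(k+2) else if p % (k+2) ≤ k then 0 else 1) % (σ+2),
    Nat.mod_lt _ (by omega)⟩

def W (σ k : ℕ) : List (Fin (σ+2)) := (List.range (σ*(k+2))).map (fL σ k)

def aL (σ : ℕ) : Fin (σ+2) := ⟨0, by omega⟩
def dL (σ : ℕ) : Fin (σ+2) := ⟨1, by omega⟩
def rep (σ j : ℕ) : List (Fin (σ+2)) := List.replicate j (aL σ)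

lemma aL_ne_dL (σ : ℕ) : aL σ ≠ dL σ := by simp [aL, dL, Fin.ext_iff]

lemma length_W (σ k : ℕ) : (W σ k).length = σ*(k+2) := by simp [W]

lemma length_rep (σ j : ℕ) : (rep σ j).length = j := by simp [rep]

variable {σ k : ℕ}

lemma decomp (k i : ℕ) : ∃ q r, r < k+2 ∧ i = q*(k+2)+r :=
  ⟨i/(k+2), i%(k+2), Nat.mod_lt _ (by omega), by rw [Nat.mul_comm]; exact (Nat.div_add_mod _ _).symm⟩

lemma mod_mk {m q r : ℕ} (h : r < m) : (q*m + r) % m = r := by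
  rw [Nat.mul_comm, Nat.mul_add_mod, Nat.mod_eq_of_lt h]

lemma div_mk {m q r : ℕ} (h : r < m) : (q*m + r) / m = q := by
  rw [Nat.add_comm, Nat.add_mul_div_right _ _ (by omega : 0 < m), Nat.div_eq_of_lt h]
  omega

lemma q_lt {q r : ℕ} (hr : r < k+2) (hN : q*(k+2)+r < σ*(k+2)) : q < σ := by
  by_contra h
  push_neg at h
  have : σ*(k+2) ≤ q*(k+2) := Nat.mul_le_mul_right _ h
  omega

lemma fL_val (hσ : 2 ≤ σ) {q r : ℕ} (hr : r < k+2) (hN : q*(k+2)+r < σ*(k+2)) :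
    (fL σ k (q*(k+2)+r)).val = if r = 0 then 2 + q else if r ≤ k then 0 else 1 := by
  have hq : q < σ := q_lt hr hN
  unfold fL
  simp only [mod_mk hr, div_mk hr]
  split_ifs with h1 h2 <;> [skip; skip; skip] <;> exact Nat.mod_eq_of_lt (by omega)

lemma fL_a (hσ : 2 ≤ σ) {q r : ℕ} (h1 : 1 ≤ r) (h2 : r ≤ k) : fL σ k (q*(k+2)+r) = aL σ := by
  apply Fin.ext
  unfold fL
  simp only [mod_mk (by omega : r < k+2)]
  rw [if_neg (by omega), if_pos h2]
  rfl

lemma fL_d (hσ : 2 ≤ σ) (q : ℕ) : fL σ k (q*(k+2)+(k+1)) = dL σ := by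
  apply Fin.ext
  unfold fL
  simp only [mod_mk (by omega : k+1 < k+2)]
  rw [if_neg (by omega), if_neg (by omega)]
  rw [Nat.mod_eq_of_lt (by omega : 1 < σ+2)]; rfl

lemma fL_b (hσ : 2 ≤ σ) {q : ℕ} (hq : q < σ) : (fL σ k (q*(k+2))).val = 2 + q := by
  have := fL_val hσ (by omega : (0:ℕ) < k+2) (q := q) (by nlinarith)
  simpa using this

/-- reverse reading of letters -/
lemma eq_a_iff (hσ : 2 ≤ σ) {q r : ℕ} (hr : r < k+2) (hN : q*(k+2)+r < σ*(k+2)) :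
    fL σ k (q*(k+2)+r) = aL σ ↔ (1 ≤ r ∧ r ≤ k) := by
  rw [Fin.ext_iff, fL_val hσ hr hN]
  rw [show (aL σ).val = 0 from rfl]
  split_ifs <;> first
  | (rw [false_iff]; omega)
  | (rw [true_iff]; omega)
  | (constructor <;> intro h' <;> omega)

lemma eq_d_iff (hσ : 2 ≤ σ) {q r : ℕ} (hr : r < k+2) (hN : q*(k+2)+r < σ*(k+2)) :
    fL σ k (q*(k+2)+r) = dL σ ↔ r = k+1 := by
  rw [Fin.ext_iff, fL_val hσ hr hN]
  rw [show (dL σ).val = 1 from rfl]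
  split_ifs <;> first
  | (rw [false_iff]; omega)
  | (rw [true_iff]; omega)
  | (constructor <;> intro h' <;> omega)

lemma ge2_iff (hσ : 2 ≤ σ) {q r : ℕ} (hr : r < k+2) (hN : q*(k+2)+r < σ*(k+2)) :
    2 ≤ (fL σ k (q*(k+2)+r)).val ↔ r = 0 := by
  rw [fL_val hσ hr hN]
  split_ifs <;> first
  | (rw [false_iff]; omega)
  | (rw [true_iff]; omega)
  | (constructor <;> intro h' <;> omega)

end LBC

namespace LBC

variable {σ k : ℕ}

lemma mem_OccSet_W {S : List (Fin (σ+2))} {i : ℕ} :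
    i ∈ OccSet (W σ k) S ↔
      i + S.length ≤ σ*(k+2) ∧ ∀ j (hj : j < S.length), S[j] = fL σ k (i+j) := by
  rw [mem_OccSet, length_W]
  constructor
  · rintro ⟨h1, h2⟩
    have hlen : i + S.length ≤ σ*(k+2) := by
      have := occ_len h2 (by rw [length_W]; exact h1)
      rw [length_W] at this; exact this
    refine ⟨hlen, fun j hj => ?_⟩
    have hg := List.getElem_of_eq h2.symm hj
    rw [hg, List.getElem_take, List.getElem_drop]
    simp only [W, List.getElem_map, List.getElem_range]
  · rintro ⟨h1, h2⟩
    refine ⟨by omega, List.ext_getElem ?_ fun j hj1 hj2 => ?_⟩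
    · simp only [List.length_take, List.length_drop, length_W]; omega
    · rw [List.getElem_take, List.getElem_drop]
      simp only [W, List.getElem_map, List.getElem_range]
      exact (h2 j hj2).symm

lemma mem_OccSet_cons {S : List (Fin (σ+2))} {c : Fin (σ+2)} {i : ℕ} :
    i ∈ OccSet (W σ k) (c :: S) ↔ fL σ k i = c ∧ (i+1) ∈ OccSet (W σ k) S := by
  rw [mem_OccSet_W, mem_OccSet_W]
  constructor
  · rintro ⟨h1, h2⟩
    have h0 := h2 0 (by simp)
    simp at h0
    refine ⟨h0.symm, ⟨by simp at h1; omega, fun j hj => ?_⟩⟩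
    have := h2 (j+1) (by simp; omega)
    simpa [Nat.add_assoc, Nat.add_comm 1 j, Nat.add_left_comm] using this
  · rintro ⟨h0, h1, h2⟩
    refine ⟨by simp; omega, fun j hj => ?_⟩
    match j with
    | 0 => simpa using h0.symm
    | j+1 =>
      have := h2 j (by simp at hj; omega)
      simpa [Nat.add_assoc, Nat.add_comm 1 j, Nat.add_left_comm] using this

lemma mem_OccSet_append {S : List (Fin (σ+2))} {c : Fin (σ+2)} {i : ℕ} :
    i ∈ OccSet (W σ k) (S ++ [c]) ↔
      i ∈ OccSet (W σ k) S ∧ i + S.length < σ*(k+2) ∧ fL σ k (i + S.length) = c := by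
  rw [mem_OccSet_W, mem_OccSet_W]
  constructor
  · rintro ⟨h1, h2⟩
    simp only [List.length_append, List.length_cons, List.length_nil] at h1
    have hlast := h2 S.length (by simp)
    rw [List.getElem_append_right (le_refl _)] at hlast
    simp at hlast
    refine ⟨⟨by omega, fun j hj => ?_⟩, by omega, hlast.symm⟩
    have := h2 j (by simp; omega)
    rwa [List.getElem_append_left hj] at this
  · rintro ⟨⟨h1, h2⟩, h3, h4⟩
    refine ⟨by simp; omega, fun j hj => ?_⟩
    simp only [List.length_append, List.length_cons, List.length_nil] at hj
    rcases Nat.lt_or_ge j S.length with h | h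
    · rw [List.getElem_append_left h]
      exact h2 j h
    · have hj' : j = S.length := by omega
      subst hj'
      rw [List.getElem_append_right (le_refl _)]
      simpa using h4.symm

lemma mem_OccSet_rep {j i : ℕ} :
    i ∈ OccSet (W σ k) (rep σ j) ↔
      i + j ≤ σ*(k+2) ∧ ∀ j' < j, fL σ k (i+j') = aL σ := by
  rw [mem_OccSet_W]
  simp only [rep, List.length_replicate, List.getElem_replicate]
  constructor
  · rintro ⟨h1, h2⟩
    exact ⟨h1, fun j' hj' => (h2 j' hj').symm⟩
  · rintro ⟨h1, h2⟩
    exact ⟨h1, fun j' hj' => (h2 j' hj').symm⟩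

/-! ### OccSet-level extension lemmas -/

lemma occ_right_lt' [DecidableEq α] {T S : List α} {c : α} {i₀ : ℕ}
    (hi₀ : i₀ ∈ OccSet T S) (h2 : i₀ ∉ OccSet T (S ++ [c])) :
    occ T (S ++ [c]) < occ T S :=
  occ_right_lt hi₀ fun h => h2 (mem_OccSet.mpr ⟨(mem_OccSet.mp hi₀).1, h⟩)

lemma occ_left_lt' [DecidableEq α] {T S : List α} {c : α} {i₀ : ℕ}
    (hi₀ : i₀ ∈ OccSet T S) (h2 : i₀ = 0 ∨ i₀ - 1 ∉ OccSet T (c :: S)) :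
    occ T (c :: S) < occ T S := by
  refine occ_left_lt hi₀ ?_
  rcases h2 with h | h
  · exact Or.inl h
  · refine Or.inr fun hc => h (mem_OccSet.mpr ⟨?_, hc⟩)
    have := (mem_OccSet.mp hi₀).1
    omega

lemma occ_right_ge' [DecidableEq α] {T S : List α} {c : α}
    (h : ∀ i ∈ OccSet T S, i ∈ OccSet T (S ++ [c])) :
    occ T S ≤ occ T (S ++ [c]) :=
  occ_right_ge fun i hi => (mem_OccSet.mp (h i hi)).2

lemma occ_left_ge' [DecidableEq α] {T S : List α} {c : α}
    (h : ∀ i ∈ OccSet T S, 1 ≤ i ∧ i - 1 ∈ OccSet T (c :: S)) :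
    occ T S ≤ occ T (c :: S) :=
  occ_left_ge fun i hi => ⟨(h i hi).1, (mem_OccSet.mp (h i hi).2).2⟩

end LBC

namespace LBC

variable {σ k : ℕ}

lemma N_ge (hσ : 2 ≤ σ) : 2*(k+2) ≤ σ*(k+2) := Nat.mul_le_mul_right _ hσ

lemma mul_succ_le (hq : q < σ) : q*(k+2) + (k+2) ≤ σ*(k+2) := by
  have h1 : (q+1)*(k+2) = q*(k+2) + (k+2) := by ring
  have h2 : (q+1)*(k+2) ≤ σ*(k+2) := Nat.mul_le_mul_right _ (by omega)
  omega

lemma occ_rep_pos (hσ : 2 ≤ σ) {i j q r : ℕ} (hi : i = q*(k+2)+r) (hr1 : 1 ≤ r)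
    (hrj : r + j ≤ k+1) (hN : i + j ≤ σ*(k+2)) : i ∈ OccSet (W σ k) (rep σ j) := by
  rw [mem_OccSet_rep]
  refine ⟨hN, fun j' hj' => ?_⟩
  have h1 : i + j' = q*(k+2) + (r+j') := by omega
  rw [h1]
  exact fL_a hσ (by omega) (by omega)

lemma one_mem_rep (hσ : 2 ≤ σ) (hk : 1 ≤ k) {j : ℕ} (hj : j ≤ k) :
    1 ∈ OccSet (W σ k) (rep σ j) := by
  have := N_ge (k := k) hσ
  exact occ_rep_pos hσ (q := 0) (r := 1) (by ring) le_rfl (by omega) (by omega)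

lemma two_mem_rep (hσ : 2 ≤ σ) (hk : 1 ≤ k) {j : ℕ} (hj : j < k) :
    2 ∈ OccSet (W σ k) (rep σ j) := by
  have := N_ge (k := k) hσ
  exact occ_rep_pos hσ (q := 0) (r := 2) (by ring) (by omega) (by omega) (by omega)

lemma two_le_occ_rep (hσ : 2 ≤ σ) (hk : 1 ≤ k) {j : ℕ} (hj : j < k) :
    2 ≤ occ (W σ k) (rep σ j) := by
  rw [occ_eq]
  have h := Finset.one_lt_card.mpr ⟨1, one_mem_rep hσ hk (by omega), 2, two_mem_rep hσ hk hj,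
    by omega⟩
  omega

lemma fL_zero_val (hσ : 2 ≤ σ) (hk : 1 ≤ k) : (fL σ k 0).val = 2 := by
  have := fL_b (k := k) hσ (q := 0) (by omega)
  simpa using this

lemma fL_one (hσ : 2 ≤ σ) (hk : 1 ≤ k) : fL σ k 1 = aL σ := by
  have := fL_a (k := k) hσ (q := 0) (r := 1) le_rfl hk
  simpa using this

lemma left_lt_rep (hσ : 2 ≤ σ) (hk : 1 ≤ k) {j : ℕ} (hj : j < k) (c : Fin (σ+2)) :
    occ (W σ k) (c :: rep σ j) < occ (W σ k) (rep σ j) := by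
  by_cases hc : c.val = 2
  · refine occ_left_lt' (two_mem_rep hσ hk hj) (Or.inr fun h => ?_)
    rw [show (2:ℕ) - 1 = 1 by omega, mem_OccSet_cons] at h
    have := congrArg Fin.val h.1
    rw [fL_one hσ hk] at this
    rw [show (aL σ).val = 0 from rfl] at this
    omega
  · refine occ_left_lt' (one_mem_rep hσ hk (by omega)) (Or.inr fun h => ?_)
    rw [show (1:ℕ) - 1 = 0 by omega, mem_OccSet_cons] at h
    have := congrArg Fin.val h.1
    rw [fL_zero_val hσ hk] at this
    omega

lemma right_lt_rep (hσ : 2 ≤ σ) (hk : 1 ≤ k) {j : ℕ} (hj : j < k) (c : Fin (σ+2)) :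
    occ (W σ k) (rep σ j ++ [c]) < occ (W σ k) (rep σ j) := by
  by_cases hc : c = aL σ
  · have hmem : (k+1-j) ∈ OccSet (W σ k) (rep σ j) := by
      have := N_ge (k := k) hσ
      exact occ_rep_pos hσ (q := 0) (r := k+1-j) (by omega) (by omega) (by omega)
        (by omega)
    refine occ_right_lt' hmem fun h => ?_
    rw [mem_OccSet_append, length_rep] at h
    have hd : fL σ k (k+1-j+j) = c := h.2.2
    rw [show k+1-j+j = 0*(k+2)+(k+1) by omega, fL_d hσ] at hd
    exact aL_ne_dL σ (hc ▸ hd.symm ▸ rfl)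
  · refine occ_right_lt' (one_mem_rep hσ hk (by omega)) fun h => ?_
    rw [mem_OccSet_append, length_rep] at h
    have hd : fL σ k (1+j) = c := h.2.2
    rw [show 1+j = 0*(k+2)+(1+j) by ring, fL_a hσ (by omega) (by omega)] at hd
    exact hc hd.symm

lemma maxrep_rep (hσ : 2 ≤ σ) (hk : 1 ≤ k) {j : ℕ} (hj : j < k) :
    MaxRepeat (W σ k) (rep σ j) :=
  ⟨two_le_occ_rep hσ hk hj, fun c => ⟨left_lt_rep hσ hk hj c, right_lt_rep hσ hk hj c⟩⟩

/-! ### the maximal repeat `a^k d` -/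

lemma skd_mem (hσ : 2 ≤ σ) (hk : 1 ≤ k) {q : ℕ} (hq : q < σ) :
    q*(k+2)+1 ∈ OccSet (W σ k) (rep σ k ++ [dL σ]) := by
  have hle := mul_succ_le (σ := σ) (k := k) hq
  rw [mem_OccSet_append, length_rep]
  refine ⟨occ_rep_pos hσ (q := q) (r := 1) rfl le_rfl (by omega) (by omega), by omega, ?_⟩
  rw [show q*(k+2)+1+k = q*(k+2)+(k+1) by omega]
  exact fL_d hσ q

lemma two_le_occ_skd (hσ : 2 ≤ σ) (hk : 1 ≤ k) :
    2 ≤ occ (W σ k) (rep σ k ++ [dL σ]) := by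
  rw [occ_eq]
  have h1 := skd_mem hσ hk (q := 0) (by omega)
  have h2 := skd_mem hσ hk (q := 1) (by omega)
  simp only [Nat.zero_mul, Nat.one_mul, Nat.zero_add] at h1 h2
  have h := Finset.one_lt_card.mpr ⟨1, h1, (k+2)+1, h2, by omega⟩
  omega

lemma left_lt_skd (hσ : 2 ≤ σ) (hk : 1 ≤ k) (c : Fin (σ+2)) :
    occ (W σ k) (c :: (rep σ k ++ [dL σ])) < occ (W σ k) (rep σ k ++ [dL σ]) := by
  by_cases hc : c.val = 2
  · have h2 := skd_mem hσ hk (q := 1) (by omega)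
    simp only [Nat.one_mul] at h2
    refine occ_left_lt' h2 (Or.inr fun h => ?_)
    rw [show (k+2)+1 - 1 = k+2 by omega, mem_OccSet_cons] at h
    have := congrArg Fin.val h.1
    rw [show (k+2 : ℕ) = 1*(k+2)+0 by ring] at this
    rw [fL_val hσ (by omega) (by have := N_ge (k:=k) hσ; omega)] at this
    simp at this
    omega
  · have h1 := skd_mem hσ hk (q := 0) (by omega)
    simp only [Nat.zero_mul, Nat.zero_add] at h1
    refine occ_left_lt' h1 (Or.inr fun h => ?_)
    rw [show (1:ℕ) - 1 = 0 by omega, mem_OccSet_cons] at h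
    have := congrArg Fin.val h.1
    rw [fL_zero_val hσ hk] at this
    omega

lemma right_lt_skd (hσ : 2 ≤ σ) (hk : 1 ≤ k) (c : Fin (σ+2)) :
    occ (W σ k) ((rep σ k ++ [dL σ]) ++ [c]) < occ (W σ k) (rep σ k ++ [dL σ]) := by
  have hmem := skd_mem hσ hk (q := σ-1) (by omega)
  refine occ_right_lt' hmem fun h => ?_
  rw [mem_OccSet_append] at h
  have hlen : (σ-1)*(k+2)+1 + (rep σ k ++ [dL σ]).length < σ*(k+2) := h.2.1
  rw [List.length_append, length_rep] at hlen
  have heq : (σ-1)*(k+2) + (k+2) = σ*(k+2) := by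
    obtain ⟨s, rfl⟩ : ∃ s, σ = s+1 := ⟨σ-1, by omega⟩
    have h1 : (s+1)*(k+2) = s*(k+2) + (k+2) := by ring
    simp only [Nat.add_sub_cancel]
    omega
  simp at hlen
  omega

lemma maxrep_skd (hσ : 2 ≤ σ) (hk : 1 ≤ k) : MaxRepeat (W σ k) (rep σ k ++ [dL σ]) :=
  ⟨two_le_occ_skd hσ hk, fun c => ⟨left_lt_skd hσ hk c, right_lt_skd hσ hk c⟩⟩

end LBC

namespace LBC

variable {σ k : ℕ}

lemma occ_nonempty [DecidableEq α] {T S : List α} (h : 2 ≤ occ T S) :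
    (OccSet T S).Nonempty := by
  rw [occ_eq] at h
  exact Finset.card_pos.mp (by omega)

/-- letters of a repeated string have value ≤ 1 (are `a` or `d`) -/
lemma letters_le_one (hσ : 2 ≤ σ) {S : List (Fin (σ+2))} (h2 : 2 ≤ occ (W σ k) S) :
    ∀ j (hj : j < S.length), (S[j]).val ≤ 1 := by
  intro j hj
  rw [occ_eq] at h2
  obtain ⟨i₁, hi₁, i₂, hi₂, hne⟩ := Finset.one_lt_card.mp (show 1 < (OccSet (W σ k) S).card by omega)
  rw [mem_OccSet_W] at hi₁ hi₂
  by_contra hval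
  push_neg at hval
  have e₁ := hi₁.2 j hj
  have e₂ := hi₂.2 j hj
  obtain ⟨q₁, r₁, hr₁, hd₁⟩ := decomp k (i₁+j)
  obtain ⟨q₂, r₂, hr₂, hd₂⟩ := decomp k (i₂+j)
  have hN₁ : q₁*(k+2)+r₁ < σ*(k+2) := by omega
  have hN₂ : q₂*(k+2)+r₂ < σ*(k+2) := by omega
  rw [hd₁] at e₁
  rw [hd₂] at e₂
  have hz₁ : r₁ = 0 := (ge2_iff hσ hr₁ hN₁).mp (by rw [← e₁]; omega)
  have hz₂ : r₂ = 0 := (ge2_iff hσ hr₂ hN₂).mp (by rw [← e₂]; omega)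
  subst hz₁; subst hz₂
  have v₁ : (S[j]).val = 2 + q₁ := by
    rw [e₁, fL_val hσ hr₁ hN₁]; simp
  have v₂ : (S[j]).val = 2 + q₂ := by
    rw [e₂, fL_val hσ hr₂ hN₂]; simp
  have : q₁ = q₂ := by omega
  subst this
  omega

lemma val_le_one_cases {c : Fin (σ+2)} (h : c.val ≤ 1) : c = aL σ ∨ c = dL σ := by
  have ha : (aL σ).val = 0 := rfl
  have hd : (dL σ).val = 1 := rfl
  rcases Nat.lt_or_ge c.val 1 with h1 | h1
  · exact Or.inl (Fin.ext (by omega))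
  · exact Or.inr (Fin.ext (by omega))

/-- a repeated string is `a^L` or `a^(L-1) d` -/
lemma shape (hσ : 2 ≤ σ) {S : List (Fin (σ+2))} (h2 : 2 ≤ occ (W σ k) S) :
    S = rep σ S.length ∨ (1 ≤ S.length ∧ S = rep σ (S.length - 1) ++ [dL σ]) := by
  obtain ⟨i, hi⟩ := occ_nonempty h2
  have hiW := mem_OccSet_W.mp hi
  have hval := letters_le_one hσ h2
  -- every letter except possibly the last is aL
  have hbody : ∀ j (hj : j + 1 < S.length), S[j]'(by omega) = aL σ := by
    intro j hj
    rcases val_le_one_cases (hval j (by omega)) with h | h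
    · exact h
    · exfalso
      have e := hiW.2 j (by omega)
      rw [h] at e
      obtain ⟨q, r, hr, hd⟩ := decomp k (i+j)
      have hN : q*(k+2)+r < σ*(k+2) := by omega
      rw [hd] at e
      have hr' : r = k+1 := (eq_d_iff hσ hr hN).mp e.symm
      -- next letter has value ≥ 2
      have e2 := hiW.2 (j+1) hj
      have hd2 : i+(j+1) = (q+1)*(k+2) + 0 := by
        have : (q+1)*(k+2) = q*(k+2)+(k+2) := by ring
        omega
      rw [hd2] at e2
      have hN2 : (q+1)*(k+2) + 0 < σ*(k+2) := by
        have : (q+1)*(k+2) = q*(k+2)+(k+2) := by ring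
        omega
      have : 2 ≤ (S[j+1]'hj).val := by
        rw [e2, fL_val hσ (by omega) hN2]
        simp
      have := hval (j+1) hj
      omega
  rcases Nat.eq_zero_or_pos S.length with h0 | h0
  · left
    rw [List.length_eq_zero_iff] at h0
    rw [h0]; rfl
  · rcases val_le_one_cases (hval (S.length - 1) (by omega)) with hlast | hlast
    · left
      refine List.ext_getElem (by rw [length_rep]) fun j hj1 hj2 => ?_
      simp only [rep, List.getElem_replicate]
      rcases Nat.lt_or_ge (j+1) S.length with h | h
      · exact hbody j h
      · have : j = S.length - 1 := by omega
        subst this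
        exact hlast
    · right
      refine ⟨h0, List.ext_getElem (by
        simp only [List.length_append, length_rep, List.length_cons, List.length_nil]
        omega) fun j hj1 hj2 => ?_⟩
      rcases Nat.lt_or_ge (j+1) S.length with h | h
      · rw [List.getElem_append_left (by rw [length_rep]; omega)]
        simp only [rep, List.getElem_replicate]
        exact hbody j h
      · have hj' : j = S.length - 1 := by omega
        subst hj'
        rw [List.getElem_append_right (by rw [length_rep])]
        simp only [length_rep, Nat.sub_self, List.getElem_cons_zero]
        exact hlast

/-- `a^j` occurring means `j ≤ k`, and an occurrence of `a^k` starts right after a `b`. -/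
lemma rep_occ_le (hσ : 2 ≤ σ) {i j : ℕ} (h : i ∈ OccSet (W σ k) (rep σ j)) (hj1 : 1 ≤ j) :
    j ≤ k := by
  rw [mem_OccSet_rep] at h
  by_contra hgt
  push_neg at hgt
  obtain ⟨q, r, hr, hd⟩ := decomp k i
  have e0 := h.2 0 (by omega)
  rw [show i + 0 = q*(k+2)+r by omega] at e0
  have hN : q*(k+2)+r < σ*(k+2) := by omega
  have hr0 := (eq_a_iff hσ hr hN).mp e0
  have ed := h.2 (k+1-r) (by omega)
  rw [show i + (k+1-r) = q*(k+2)+(k+1) by omega, fL_d hσ] at ed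
  exact aL_ne_dL σ ed.symm

lemma rep_k_extends (hσ : 2 ≤ σ) (hk : 1 ≤ k) {i : ℕ}
    (h : i ∈ OccSet (W σ k) (rep σ k)) : i ∈ OccSet (W σ k) (rep σ k ++ [dL σ]) := by
  have h' := mem_OccSet_rep.mp h
  obtain ⟨q, r, hr, hd⟩ := decomp k i
  have e0 := h'.2 0 (by omega)
  rw [show i + 0 = q*(k+2)+r by omega] at e0
  have hN : q*(k+2)+r < σ*(k+2) := by omega
  have hr0 := (eq_a_iff hσ hr hN).mp e0
  have hr1 : r = 1 := by
    by_contra hne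
    have ed := h'.2 (k+1-r) (by omega)
    rw [show i + (k+1-r) = q*(k+2)+(k+1) by omega, fL_d hσ] at ed
    exact aL_ne_dL σ ed.symm
  have hq : q < σ := q_lt hr hN
  have hle := mul_succ_le (σ := σ) (k := k) hq
  rw [mem_OccSet_append, length_rep]
  refine ⟨h, by omega, ?_⟩
  rw [show i + k = q*(k+2)+(k+1) by omega]
  exact fL_d hσ q

lemma not_maxrep_rep_k (hσ : 2 ≤ σ) (hk : 1 ≤ k) : ¬ MaxRepeat (W σ k) (rep σ k) := by
  intro hm
  have h1 := (hm.2 (dL σ)).2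
  have h2 := occ_right_ge' (fun i hi => rep_k_extends hσ hk hi)
  omega

lemma repd_pred (hσ : 2 ≤ σ) {i j : ℕ} (hj : j < k)
    (h : i ∈ OccSet (W σ k) (rep σ j ++ [dL σ])) :
    1 ≤ i ∧ i - 1 ∈ OccSet (W σ k) (aL σ :: (rep σ j ++ [dL σ])) := by
  rw [mem_OccSet_append, length_rep] at h
  obtain ⟨hrep, hlen, hd⟩ := h
  obtain ⟨q, r, hr, hdec⟩ := decomp k (i+j)
  have hN : q*(k+2)+r < σ*(k+2) := by omega
  rw [hdec] at hd
  have hrd : r = k+1 := (eq_d_iff hσ hr hN).mp hd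
  -- i = q*(k+2) + (k+1-j), with k+1-j ≥ 2
  have hi : i = q*(k+2) + (k+1-j) := by omega
  have hge : 1 ≤ i := by omega
  refine ⟨hge, ?_⟩
  rw [mem_OccSet_cons]
  constructor
  · rw [show i - 1 = q*(k+2) + (k-j) by omega]
    exact fL_a hσ (by omega) (by omega)
  · rw [show i - 1 + 1 = i by omega, mem_OccSet_append, length_rep]
    exact ⟨hrep, hlen, by rw [hdec]; exact hd⟩

lemma not_maxrep_repd (hσ : 2 ≤ σ) {j : ℕ} (hj : j < k) :
    ¬ MaxRepeat (W σ k) (rep σ j ++ [dL σ]) := by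
  intro hm
  have h1 := (hm.2 (aL σ)).1
  have h2 := occ_left_ge' (fun i hi => repd_pred hσ hj hi)
  omega

/-- the full classification -/
lemma MRset_eq (hσ : 2 ≤ σ) (hk : 1 ≤ k) :
    MRset (W σ k) = insert (rep σ k ++ [dL σ]) ((Finset.range k).image (rep σ)) := by
  ext S
  rw [show MRset (W σ k) = (((W σ k).tails.flatMap List.inits).toFinset.filter
      fun S => MaxRepeat (W σ k) S) from rfl,
    Finset.mem_filter, mem_substr_iff, Finset.mem_insert, Finset.mem_image]
  constructor
  · rintro ⟨hinf, hmax⟩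
    rcases shape hσ hmax.1 with hS | ⟨hlen, hS⟩
    · right
      obtain ⟨i, hi⟩ := occ_nonempty hmax.1
      rw [hS] at hi hmax ⊢
      rcases Nat.eq_zero_or_pos S.length with h0 | h0
      · exact ⟨S.length, by simp [Finset.mem_range]; omega, rfl⟩
      · have hle := rep_occ_le hσ hi h0
        have hne : S.length ≠ k := fun he => not_maxrep_rep_k hσ hk (he ▸ hmax)
        exact ⟨S.length, Finset.mem_range.mpr (by omega), rfl⟩
    · left
      rw [hS] at hmax ⊢
      obtain ⟨i, hi⟩ := occ_nonempty hmax.1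
      have hrep : i ∈ OccSet (W σ k) (rep σ (S.length - 1)) :=
        (mem_OccSet_append.mp hi).1
      have hle : S.length - 1 ≤ k := by
        rcases Nat.eq_zero_or_pos (S.length - 1) with h0 | h0
        · omega
        · exact rep_occ_le hσ hrep h0
      have : S.length - 1 = k := by
        by_contra hne
        exact not_maxrep_repd hσ (by omega) hmax
      rw [this]
  · intro h
    rcases h with h | ⟨j, hj, h⟩
    · subst h
      refine ⟨?_, maxrep_skd hσ hk⟩
      exact infix_iff_occ.mpr ⟨1, by have := skd_mem hσ hk (q := 0) (by omega); simpa using this⟩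
    · subst h
      refine ⟨?_, maxrep_rep hσ hk (Finset.mem_range.mp hj)⟩
      exact infix_iff_occ.mpr ⟨1, one_mem_rep hσ hk (by have := Finset.mem_range.mp hj; omega)⟩

end LBC

namespace LBC

variable {σ k : ℕ}

/-! ### cardinality helpers on `Fin m` -/

lemma card_val_ge (m t : ℕ) (ht : t ≤ m) :
    ((Finset.univ : Finset (Fin m)).filter fun c => t ≤ c.val).card = m - t := by
  rw [show m - t = (Finset.range (m - t)).card by simp]
  refine Finset.card_bij' (fun c _ => c.val - t) (fun n hn => ⟨n + t, ?_⟩) ?_ ?_ ?_ ?_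
  · rw [Finset.mem_range] at hn; omega
  · intro c hc
    have hc' := (Finset.mem_filter.mp hc).2
    show c.val - t ∈ Finset.range (m - t)
    rw [Finset.mem_range]
    have := c.isLt
    omega
  · intro n hn
    rw [Finset.mem_range] at hn
    show (⟨n + t, _⟩ : Fin m) ∈ Finset.filter _ _
    rw [Finset.mem_filter]
    exact ⟨Finset.mem_univ _, by simp⟩
  · intro c hc
    have hc' := (Finset.mem_filter.mp hc).2
    apply Fin.ext
    show c.val - t + t = c.val
    omega
  · intro n hn
    rw [Finset.mem_range] at hn
    show n + t - t = n
    omega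

lemma card_val_ne_one (m : ℕ) (hm : 2 ≤ m) :
    ((Finset.univ : Finset (Fin m)).filter fun c => c.val ≠ 1).card = m - 1 := by
  have h1 : ((Finset.univ : Finset (Fin m)).filter fun c => c.val = 1) = {⟨1, by omega⟩} := by
    ext c
    simp [Fin.ext_iff]
  have h2 := Finset.card_filter_add_card_filter_not
    (s := (Finset.univ : Finset (Fin m))) (fun c : Fin m => c.val = 1)
  rw [h1] at h2
  simp only [Finset.card_singleton, Finset.card_univ, Fintype.card_fin] at h2
  have h3 : (Finset.univ.filter fun c : Fin m => ¬ c.val = 1)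
      = (Finset.univ.filter fun c : Fin m => c.val ≠ 1) := by
    apply Finset.filter_congr
    intro c _
    rfl
  rw [h3] at h2
  omega

/-! ### occurrences of extensions -/

lemma fL_surj (hσ : 2 ≤ σ) (hk : 1 ≤ k) (c : Fin (σ+2)) :
    ∃ i, i < σ*(k+2) ∧ fL σ k i = c := by
  have hN := N_ge (k := k) hσ
  rcases Nat.lt_or_ge c.val 2 with hv | hv
  · rcases Nat.lt_or_ge c.val 1 with hv0 | hv0
    · refine ⟨1, by omega, ?_⟩
      rw [fL_one hσ hk]
      exact (Fin.ext (by rw [show (aL σ).val = 0 from rfl]; omega)).symm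
    · refine ⟨k+1, by omega, ?_⟩
      have := fL_d (k := k) hσ 0
      simp only [Nat.zero_mul, Nat.zero_add] at this
      rw [this]
      exact (Fin.ext (by rw [show (dL σ).val = 1 from rfl]; omega)).symm
  · have hq : c.val - 2 < σ := by have := c.isLt; omega
    have hle := mul_succ_le (σ := σ) (k := k) hq
    refine ⟨(c.val - 2)*(k+2), by omega, Fin.ext ?_⟩
    rw [fL_b hσ hq]
    omega

lemma singleton_infix (hσ : 2 ≤ σ) (hk : 1 ≤ k) (c : Fin (σ+2)) :
    (rep σ 0 ++ [c]) <:+: W σ k := by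
  obtain ⟨i, hi, hc⟩ := fL_surj hσ hk c
  refine infix_iff_occ.mpr ⟨i, ?_⟩
  rw [mem_OccSet_append, length_rep, mem_OccSet_rep]
  exact ⟨⟨by omega, by omega⟩, by omega, by simpa using hc⟩

lemma singleton_infix' (hσ : 2 ≤ σ) (hk : 1 ≤ k) (c : Fin (σ+2)) :
    (c :: rep σ 0) <:+: W σ k := by
  obtain ⟨i, hi, hc⟩ := fL_surj hσ hk c
  refine infix_iff_occ.mpr ⟨i, ?_⟩
  rw [mem_OccSet_cons, mem_OccSet_rep]
  exact ⟨hc, by omega, by omega⟩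

lemma rext_nil (hσ : 2 ≤ σ) (hk : 1 ≤ k) : rext (W σ k) (rep σ 0) = σ + 2 := by
  show ((Finset.univ : Finset (Fin (σ+2))).filter fun c => (rep σ 0 ++ [c]) <:+: W σ k).card
    = σ + 2
  rw [Finset.filter_true_of_mem (fun c _ => singleton_infix hσ hk c)]
  simp

lemma lext_nil (hσ : 2 ≤ σ) (hk : 1 ≤ k) : lext (W σ k) (rep σ 0) = σ + 2 := by
  show ((Finset.univ : Finset (Fin (σ+2))).filter fun c => (c :: rep σ 0) <:+: W σ k).card
    = σ + 2
  rw [Finset.filter_true_of_mem (fun c _ => singleton_infix' hσ hk c)]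
  simp

/-- right extensions of `a^j`, `1 ≤ j < k` -/
lemma rext_rep_iff (hσ : 2 ≤ σ) (hk : 1 ≤ k) {j : ℕ} (hj1 : 1 ≤ j) (hj : j < k)
    (c : Fin (σ+2)) : (rep σ j ++ [c]) <:+: W σ k ↔ c.val ≤ 1 := by
  have hN := N_ge (k := k) hσ
  constructor
  · intro h
    obtain ⟨i, hi⟩ := infix_iff_occ.mp h
    rw [mem_OccSet_append, length_rep] at hi
    obtain ⟨hrep, hlen, hc⟩ := hi
    rw [mem_OccSet_rep] at hrep
    have hiN := hrep.1
    have ha := hrep.2 (j-1) (by omega)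
    obtain ⟨q, r, hr, hd⟩ := decomp k (i+(j-1))
    rw [hd] at ha
    have hra := (eq_a_iff hσ hr (by omega)).mp ha
    have hij : i + j = q*(k+2) + (r+1) := by omega
    have hb1 : r + 1 < k + 2 := by omega
    have hdbg : i + j < σ*(k+2) := hlen
    have hb2 : q*(k+2) + (r+1) < σ*(k+2) := by omega
    rw [hij] at hc
    have := congrArg Fin.val hc
    rw [fL_val hσ hb1 hb2] at this
    split_ifs at this <;> first | exact ‹False›.elim | omega
  · intro h
    rcases val_le_one_cases h with rfl | rfl
    · refine infix_iff_occ.mpr ⟨1, ?_⟩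
      rw [mem_OccSet_append, length_rep]
      refine ⟨one_mem_rep hσ hk (by omega), by omega, ?_⟩
      have := fL_a (k := k) hσ (q := 0) (r := 1+j) (by omega) (by omega)
      simpa using this
    · refine infix_iff_occ.mpr ⟨k+1-j, ?_⟩
      rw [mem_OccSet_append, length_rep]
      refine ⟨occ_rep_pos hσ (q := 0) (r := k+1-j) (by omega) (by omega) (by omega) (by omega),
        by omega, ?_⟩
      rw [show k+1-j+j = 0*(k+2)+(k+1) by omega]
      exact fL_d hσ 0

/-- left extensions of `a^j`, `1 ≤ j < k` -/
lemma lext_rep_iff (hσ : 2 ≤ σ) (hk : 1 ≤ k) {j : ℕ} (hj1 : 1 ≤ j) (hj : j < k)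
    (c : Fin (σ+2)) : (c :: rep σ j) <:+: W σ k ↔ c.val ≠ 1 := by
  have hN := N_ge (k := k) hσ
  constructor
  · intro h hv
    obtain ⟨i, hi⟩ := infix_iff_occ.mp h
    rw [mem_OccSet_cons] at hi
    obtain ⟨hc, hrep⟩ := hi
    rw [mem_OccSet_rep] at hrep
    have hiN := hrep.1
    have hcd : c = dL σ := Fin.ext (by rw [show (dL σ).val = 1 from rfl]; omega)
    subst hcd
    obtain ⟨q, r, hr, hd⟩ := decomp k i
    rw [hd] at hc
    have hrd := (eq_d_iff hσ hr (by omega)).mp hc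
    have ha := hrep.2 0 (by omega)
    have hmul : (q+1)*(k+2) = q*(k+2)+(k+2) := by ring
    rw [show i + 1 + 0 = (q+1)*(k+2) + 0 by omega] at ha
    have := congrArg Fin.val ha
    rw [fL_val hσ (by omega) (by omega), show (aL σ).val = 0 from rfl] at this
    simp at this
  · intro h
    rcases Nat.lt_or_ge c.val 1 with hv | hv
    · have hca : c = aL σ := Fin.ext (by rw [show (aL σ).val = 0 from rfl]; omega)
      subst hca
      refine infix_iff_occ.mpr ⟨1, ?_⟩
      rw [mem_OccSet_cons]
      exact ⟨fL_one hσ hk, two_mem_rep hσ hk hj⟩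
    · have hv2 : 2 ≤ c.val := by omega
      have hq : c.val - 2 < σ := by have := c.isLt; omega
      have hle := mul_succ_le (σ := σ) (k := k) hq
      refine infix_iff_occ.mpr ⟨(c.val-2)*(k+2), ?_⟩
      rw [mem_OccSet_cons]
      refine ⟨Fin.ext (by rw [fL_b hσ hq]; omega), ?_⟩
      exact occ_rep_pos hσ (q := c.val-2) (r := 1) (by omega) (by omega) (by omega) (by omega)

/-- an occurrence of `a^k` starts right after a `b` -/
lemma rep_k_start (hσ : 2 ≤ σ) (hk : 1 ≤ k) {i : ℕ}
    (h : i ∈ OccSet (W σ k) (rep σ k)) : ∃ q, q < σ ∧ i = q*(k+2)+1 := by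
  have h' := mem_OccSet_rep.mp h
  obtain ⟨q, r, hr, hd⟩ := decomp k i
  have e0 := h'.2 0 (by omega)
  rw [show i + 0 = q*(k+2)+r by omega] at e0
  have hN : q*(k+2)+r < σ*(k+2) := by omega
  have hr0 := (eq_a_iff hσ hr hN).mp e0
  have hr1 : r = 1 := by
    by_contra hne
    have ed := h'.2 (k+1-r) (by omega)
    rw [show i + (k+1-r) = q*(k+2)+(k+1) by omega, fL_d hσ] at ed
    exact aL_ne_dL σ ed.symm
  exact ⟨q, q_lt hr hN, by omega⟩

/-- right extensions of `a^k d` -/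
lemma rext_skd_iff (hσ : 2 ≤ σ) (hk : 1 ≤ k) (c : Fin (σ+2)) :
    ((rep σ k ++ [dL σ]) ++ [c]) <:+: W σ k ↔ 3 ≤ c.val := by
  constructor
  · intro h
    obtain ⟨i, hi⟩ := infix_iff_occ.mp h
    rw [mem_OccSet_append] at hi
    obtain ⟨hskd, hlen, hc⟩ := hi
    have hrep := (mem_OccSet_append.mp hskd).1
    obtain ⟨q, hq, rfl⟩ := rep_k_start hσ hk hrep
    simp only [List.length_append, length_rep, List.length_singleton] at hlen hc
    have he : q*(k+2)+1 + (k+1) = (q+1)*(k+2) + 0 := by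
      have : (q+1)*(k+2) = q*(k+2)+(k+2) := by ring
      omega
    rw [he] at hc hlen
    have := congrArg Fin.val hc
    rw [fL_val hσ (by omega) (by omega)] at this
    simp at this
    omega
  · intro h
    have hq : c.val - 2 < σ := by have := c.isLt; omega
    have hle := mul_succ_le (σ := σ) (k := k) hq
    obtain ⟨t, ht⟩ : ∃ t, c.val - 2 = t + 1 := ⟨c.val - 3, by omega⟩
    refine infix_iff_occ.mpr ⟨t*(k+2)+1, ?_⟩
    rw [mem_OccSet_append]
    simp only [List.length_append, length_rep, List.length_singleton]
    have he2 : t*(k+2)+1 + (k+1) = (t+1)*(k+2) := by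
      have : (t+1)*(k+2) = t*(k+2)+(k+2) := by ring
      omega
    refine ⟨skd_mem hσ hk (by omega), ?_, ?_⟩
    · rw [he2, ← ht]
      omega
    · rw [he2, ← ht, show (c.val-2)*(k+2) = (c.val-2)*(k+2) + 0 by omega]
      apply Fin.ext
      rw [fL_val hσ (by omega) (by omega)]
      simp
      omega

/-- left extensions of `a^k d` -/
lemma lext_skd_iff (hσ : 2 ≤ σ) (hk : 1 ≤ k) (c : Fin (σ+2)) :
    (c :: (rep σ k ++ [dL σ])) <:+: W σ k ↔ 2 ≤ c.val := by
  constructor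
  · intro h
    obtain ⟨i, hi⟩ := infix_iff_occ.mp h
    rw [mem_OccSet_cons] at hi
    obtain ⟨hc, hskd⟩ := hi
    have hrep := (mem_OccSet_append.mp hskd).1
    obtain ⟨q, hq, he⟩ := rep_k_start hσ hk hrep
    have hi0 : i = q*(k+2) + 0 := by omega
    rw [hi0] at hc
    have := congrArg Fin.val hc
    rw [fL_val hσ (by omega) (by have := mul_succ_le (σ := σ) (k := k) hq; omega)] at this
    simp at this
    omega
  · intro h
    have hq : c.val - 2 < σ := by have := c.isLt; omega
    have hle := mul_succ_le (σ := σ) (k := k) hq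
    refine infix_iff_occ.mpr ⟨(c.val-2)*(k+2), ?_⟩
    rw [mem_OccSet_cons]
    refine ⟨Fin.ext (by rw [fL_b hσ hq]; omega), skd_mem hσ hk hq⟩

end LBC

namespace LBC

variable {σ k : ℕ}

lemma rext_rep (hσ : 2 ≤ σ) (hk : 1 ≤ k) {j : ℕ} (hj1 : 1 ≤ j) (hj : j < k) :
    rext (W σ k) (rep σ j) = 2 := by
  show (Finset.univ.filter fun c : Fin (σ+2) => (rep σ j ++ [c]) <:+: W σ k).card = 2
  have he : (Finset.univ.filter fun c : Fin (σ+2) => (rep σ j ++ [c]) <:+: W σ k)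
      = {aL σ, dL σ} := by
    ext c
    rw [Finset.mem_filter, Finset.mem_insert, Finset.mem_singleton]
    constructor
    · intro h
      exact val_le_one_cases ((rext_rep_iff hσ hk hj1 hj c).mp h.2)
    · rintro (rfl | rfl) <;>
        exact ⟨Finset.mem_univ _, (rext_rep_iff hσ hk hj1 hj _).mpr (by
          have h0 : (aL σ).val = 0 := rfl
          have h1 : (dL σ).val = 1 := rfl
          omega)⟩
  rw [he, Finset.card_insert_of_notMem (by simp [Finset.mem_singleton]; exact aL_ne_dL σ),
    Finset.card_singleton]

lemma lext_rep (hσ : 2 ≤ σ) (hk : 1 ≤ k) {j : ℕ} (hj1 : 1 ≤ j) (hj : j < k) :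
    lext (W σ k) (rep σ j) = σ + 1 := by
  show (Finset.univ.filter fun c : Fin (σ+2) => (c :: rep σ j) <:+: W σ k).card = σ + 1
  have he : (Finset.univ.filter fun c : Fin (σ+2) => (c :: rep σ j) <:+: W σ k)
      = (Finset.univ.filter fun c : Fin (σ+2) => c.val ≠ 1) := by
    ext c
    rw [Finset.mem_filter, Finset.mem_filter]
    exact and_congr Iff.rfl (lext_rep_iff hσ hk hj1 hj c)
  rw [he, card_val_ne_one (σ+2) (by omega)]
  omega

lemma rext_skd (hσ : 2 ≤ σ) (hk : 1 ≤ k) :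
    rext (W σ k) (rep σ k ++ [dL σ]) = σ - 1 := by
  show (Finset.univ.filter
    fun c : Fin (σ+2) => ((rep σ k ++ [dL σ]) ++ [c]) <:+: W σ k).card = σ - 1
  have he : (Finset.univ.filter
      fun c : Fin (σ+2) => ((rep σ k ++ [dL σ]) ++ [c]) <:+: W σ k)
      = (Finset.univ.filter fun c : Fin (σ+2) => 3 ≤ c.val) := by
    ext c
    rw [Finset.mem_filter, Finset.mem_filter]
    exact and_congr Iff.rfl (rext_skd_iff hσ hk c)
  rw [he, card_val_ge (σ+2) 3 (by omega)]
  omega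

lemma lext_skd (hσ : 2 ≤ σ) (hk : 1 ≤ k) :
    lext (W σ k) (rep σ k ++ [dL σ]) = σ := by
  show (Finset.univ.filter
    fun c : Fin (σ+2) => (c :: (rep σ k ++ [dL σ])) <:+: W σ k).card = σ
  have he : (Finset.univ.filter
      fun c : Fin (σ+2) => (c :: (rep σ k ++ [dL σ])) <:+: W σ k)
      = (Finset.univ.filter fun c : Fin (σ+2) => 2 ≤ c.val) := by
    ext c
    rw [Finset.mem_filter, Finset.mem_filter]
    exact and_congr Iff.rfl (lext_skd_iff hσ hk c)
  rw [he, card_val_ge (σ+2) 2 (by omega)]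
  omega

lemma skd_notMem_image :
    rep σ k ++ [dL σ] ∉ (Finset.range k).image (rep σ) := by
  intro h
  obtain ⟨j, hj, he⟩ := Finset.mem_image.mp h
  have := congrArg List.length he
  rw [length_rep, List.length_append, length_rep, List.length_singleton] at this
  rw [Finset.mem_range] at hj
  omega

lemma rep_injOn : ∀ x ∈ Finset.range k, ∀ y ∈ Finset.range k, rep σ x = rep σ y → x = y := by
  intro x _ y _ h
  have := congrArg List.length h
  rwa [length_rep, length_rep] at this

lemma sum_ite_zero (A B t : ℕ) :
    ∑ j ∈ Finset.range (t+1), (if j = 0 then A else B) = A + t*B := by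
  induction t with
  | zero => simp
  | succ n ih =>
    rw [Finset.sum_range_succ, ih, if_neg (Nat.succ_ne_zero n)]
    ring

lemma er_eq (hσ : 2 ≤ σ) (hk : 1 ≤ k) : er (W σ k) = 2*k + 2*σ - 1 := by
  show (∑ S ∈ MRset (W σ k), rext (W σ k) S) = 2*k + 2*σ - 1
  rw [MRset_eq hσ hk, Finset.sum_insert skd_notMem_image, Finset.sum_image rep_injOn,
    rext_skd hσ hk]
  rw [Finset.sum_congr rfl (fun j hj => show rext (W σ k) (rep σ j)
      = if j = 0 then σ + 2 else 2 by
    rcases Nat.eq_zero_or_pos j with rfl | hp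
    · rw [if_pos rfl]; exact rext_nil hσ hk
    · rw [if_neg (by omega)]
      exact rext_rep hσ hk hp (Finset.mem_range.mp hj))]
  obtain ⟨t, rfl⟩ : ∃ t, k = t+1 := ⟨k-1, by omega⟩
  rw [sum_ite_zero]
  omega

lemma el_eq (hσ : 2 ≤ σ) (hk : 1 ≤ k) : el (W σ k) = (k+1) * (σ+1) := by
  show (∑ S ∈ MRset (W σ k), lext (W σ k) S) = (k+1) * (σ+1)
  rw [MRset_eq hσ hk, Finset.sum_insert skd_notMem_image, Finset.sum_image rep_injOn,
    lext_skd hσ hk]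
  rw [Finset.sum_congr rfl (fun j hj => show lext (W σ k) (rep σ j)
      = if j = 0 then σ + 2 else σ + 1 by
    rcases Nat.eq_zero_or_pos j with rfl | hp
    · rw [if_pos rfl]; exact lext_nil hσ hk
    · rw [if_neg (by omega)]
      exact lext_rep hσ hk hp (Finset.mem_range.mp hj))]
  obtain ⟨t, rfl⟩ : ∃ t, k = t+1 := ⟨k-1, by omega⟩
  rw [sum_ite_zero]
  have h1 : (t+1+1)*(σ+1) = t*(σ+1) + 2*σ + 2 := by ring
  omega

end LBC

namespace LBC

lemma final_arith (k σ : ℕ) (hk : 1 ≤ k) (hσ : 2 ≤ σ) :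
    1 * (min k σ * (2*k + 2*σ - 1)) ≤ 4 * ((k+1)*(σ+1)) ∧
      (k+1)*(σ+1) ≤ 4 * (min k σ * (2*k + 2*σ - 1)) := by
  obtain ⟨e, he⟩ : ∃ e, 2*k+2*σ-1 = e+1 := ⟨2*k+2*σ-2, by omega⟩
  rw [he]
  have he2 : e + 2 = 2*k + 2*σ := by omega
  rcases le_total k σ with h | h
  · rw [min_eq_left h]
    constructor
    · nlinarith [Nat.mul_le_mul_left k (show e+1 ≤ 4*σ by omega)]
    · nlinarith [Nat.mul_le_mul_left (4*k) (show k+σ ≤ e+1 by omega),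
        Nat.mul_le_mul_left k (show 2 ≤ σ from hσ),
        Nat.mul_le_mul_right σ (show 1 ≤ k from hk)]
  · rw [min_eq_right h]
    constructor
    · nlinarith [Nat.mul_le_mul_left σ (show e+1 ≤ 4*k by omega)]
    · nlinarith [Nat.mul_le_mul_left (4*σ) (show k+σ ≤ e+1 by omega),
        Nat.mul_le_mul_left k (show 2 ≤ σ from hσ),
        Nat.mul_le_mul_right σ (show 1 ≤ k from hk)]

end LBC


/-- for every `n > 1` and `1 < σ ≤ n` there is a string of length `Θ(n)`
over an alphabet of size `Θ(σ)` with `el/er ∈ Θ(min{n/σ, σ})` (constants uniform in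
`n` and `σ`). -/
theorem lower_bound_construction :
    ∃ c C : ℕ, 0 < c ∧ 0 < C ∧
      ∀ n σ : ℕ, 1 < n → 1 < σ → σ ≤ n →
        ∃ (A : Type) (_ : Fintype A) (_ : DecidableEq A) (T : List A),
          c * n ≤ T.length ∧ T.length ≤ C * n ∧
          c * σ ≤ Fintype.card A ∧ Fintype.card A ≤ C * σ ∧
          c * (min (n / σ) σ * er T) ≤ C * el T ∧
          el T ≤ C * (min (n / σ) σ * er T) := by
  refine ⟨1, 4, one_pos, by omega, fun n σ hn hσ hσn => ?_⟩
  have hσ2 : 2 ≤ σ := hσ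
  set k := n / σ with hkdef
  have hk : 1 ≤ k := (Nat.one_le_div_iff (by omega)).mpr hσn
  have hmod : n % σ < σ := Nat.mod_lt _ (by omega)
  have hdm : σ * k + n % σ = n := Nat.div_add_mod n σ
  have hring : σ * (k+2) = σ * k + 2*σ := by ring
  refine ⟨Fin (σ+2), inferInstance, inferInstance, LBC.W σ k, ?_, ?_, ?_, ?_, ?_, ?_⟩
  · rw [LBC.length_W]; omega
  · rw [LBC.length_W]; omega
  · rw [Fintype.card_fin]; omega
  · rw [Fintype.card_fin]; omega
  · rw [LBC.er_eq hσ2 hk, LBC.el_eq hσ2 hk]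
    exact (LBC.final_arith k σ hk hσ2).1
  · rw [LBC.er_eq hσ2 hk, LBC.el_eq hσ2 hk]
    exact (LBC.final_arith k σ hk hσ2).2
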